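/- Consider the two residual expressions of the Cabello-type Bell expression: E_B(a,b) = a_0^{(1)} b_0^{(1)} + a_1^{(1)} b_0^{(2)} + a_0^{(2)} b_1^{(1)} + a_1^{(2)} b_1^{(2)} + a_0^{(3)} b_0^{(1)} b_1^{(1)} + a_1^{(3)} b_0^{(2)} b_1^{(2)} and E_C(a,c) = a_0^{(1)} a_1^{(1)} c_0 + a_0^{(2)} a_1^{(2)} c_1 − a_0^{(3)} a_1^{(3)} c_0 c_1, where a : {1,2,3} → {−1,+1}², b : {1,2} → {−1,+1}², c ∈ {−1,+1}². Then: (i) there exists a deterministic strategy (a,b) with E_B(a,b) = 6 (its algebraic maximum); (ii) there exists a deterministic strategy (a,c) with E_C(a,c) = 3 (its algebraic maximum); yet (iii) for every deterministic strategy (a,b,c), E_B(a,b) + E_C(a,c) ≤ 7 < 9. -/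

import Mathlib

/-- The residual Alice–Bob expression `E_B` of the reduced Cabello Bell expression,
evaluated on a deterministic strategy; each outcome is a pair of `±1` bits. -/
def EB (a : Fin 3 → ℤ × ℤ) (b : Fin 2 → ℤ × ℤ) : ℤ :=
  (a 0).1 * (b 0).1 + (a 0).2 * (b 1).1
    + (a 1).1 * (b 0).2 + (a 1).2 * (b 1).2
    + (a 2).1 * ((b 0).1 * (b 0).2) + (a 2).2 * ((b 1).1 * (b 1).2)

/-- The residual Alice–Charlie expression `E_C` of the reduced Cabello Bell
expression, evaluated on a deterministic strategy. -/
def EC (a : Fin 3 → ℤ × ℤ) (c : ℤ × ℤ) : ℤ :=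
  (a 0).1 * (a 0).2 * c.1 + (a 1).1 * (a 1).2 * c.2
    - (a 2).1 * (a 2).2 * (c.1 * c.2)

/-- A predicate saying each outcome bit is `±1`-valued. -/
def PM (x : ℤ) : Prop := x = 1 ∨ x = -1

/-!
The six terms of `E_B` and the three terms of `E_C` are `±1`, and their product is
`-u²`, where `u` is the product of all twelve outcome bits: every bit occurs in exactly two
of the nine terms, and the only sign is the one in front of the last term of `E_C`. Hence
the product of the nine terms is `-1`, so one of them is `-1` and their sum is at most `7`.
Saturating both expressions would make all nine terms equal to `1`.
-/

open Finset

namespace PM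

theorem one : PM 1 := .inl rfl

theorem neg_one : PM (-1) := .inr rfl

theorem neg {x : ℤ} (hx : PM x) : PM (-x) := by
  rcases hx with rfl | rfl
  exacts [.inr rfl, .inl rfl]

theorem mul {x y : ℤ} (hx : PM x) (hy : PM y) : PM (x * y) := by
  rcases hx with rfl | rfl <;> rcases hy with rfl | rfl <;> simp [PM]

theorem le_one {x : ℤ} (hx : PM x) : x ≤ 1 := by
  rcases hx with rfl | rfl <;> norm_num

theorem sq_eq_one {x : ℤ} (hx : PM x) : x ^ 2 = 1 := by
  rcases hx with rfl | rfl <;> norm_num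

end PM

theorem Finset.sum_le_card_sub_two_of_prod_eq_neg_one {ι : Type*} {s : Finset ι} {x : ι → ℤ}
    (hx : ∀ i ∈ s, PM (x i)) (hprod : ∏ i ∈ s, x i = -1) : ∑ i ∈ s, x i ≤ #s - 2 := by
  classical
  obtain ⟨j, hj, hxj⟩ : ∃ j ∈ s, x j = -1 := by
    by_contra! hne
    have hall : ∀ i ∈ s, x i = 1 := fun i hi => (hx i hi).resolve_right (hne i hi)
    rw [prod_eq_one hall] at hprod
    norm_num at hprod
  have hrest : ∑ i ∈ s.erase j, x i ≤ #s - 1 := by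
    rw [← cast_card_erase_of_mem hj]
    simpa using sum_le_sum fun i hi => (hx i (mem_of_mem_erase hi)).le_one
  rw [← add_sum_erase s x hj, hxj]
  linarith

section

variable (a : Fin 3 → ℤ × ℤ) (b : Fin 2 → ℤ × ℤ) (c : ℤ × ℤ)

def combinedTerms : Fin 9 → ℤ :=
  ![(a 0).1 * (b 0).1, (a 0).2 * (b 1).1, (a 1).1 * (b 0).2, (a 1).2 * (b 1).2,
    (a 2).1 * ((b 0).1 * (b 0).2), (a 2).2 * ((b 1).1 * (b 1).2),
    (a 0).1 * (a 0).2 * c.1, (a 1).1 * (a 1).2 * c.2, -((a 2).1 * (a 2).2 * (c.1 * c.2))]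

def allBits : ℤ :=
  (a 0).1 * (a 0).2 * (a 1).1 * (a 1).2 * (a 2).1 * (a 2).2 *
    ((b 0).1 * (b 0).2 * (b 1).1 * (b 1).2) * (c.1 * c.2)

theorem EB_add_EC_eq_sum_combinedTerms : EB a b + EC a c = ∑ i, combinedTerms a b c i := by
  simp only [EB, EC, combinedTerms, Fin.sum_univ_succ, Fin.sum_univ_zero, Matrix.cons_val_zero,
    Matrix.cons_val_succ]
  ring

theorem prod_combinedTerms : ∏ i, combinedTerms a b c i = -allBits a b c ^ 2 := by
  simp only [allBits, combinedTerms, Fin.prod_univ_succ, Fin.prod_univ_zero, Matrix.cons_val_zero,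
    Matrix.cons_val_succ]
  ring

variable {a b c}
variable (ha : ∀ k, PM (a k).1 ∧ PM (a k).2) (hb : ∀ l, PM (b l).1 ∧ PM (b l).2)
  (hc : PM c.1 ∧ PM c.2)
include ha hb hc

theorem pm_combinedTerms : ∀ i, PM (combinedTerms a b c i) := by
  obtain ⟨⟨a₀₁, a₀₂⟩, ⟨a₁₁, a₁₂⟩, ⟨a₂₁, a₂₂⟩⟩ := And.intro (ha 0) (And.intro (ha 1) (ha 2))
  obtain ⟨⟨b₀₁, b₀₂⟩, ⟨b₁₁, b₁₂⟩⟩ := And.intro (hb 0) (hb 1)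
  obtain ⟨c₁, c₂⟩ := hc
  simp only [Fin.forall_fin_succ, IsEmpty.forall_iff, combinedTerms, Matrix.cons_val_zero,
    Matrix.cons_val_succ]
  exact ⟨a₀₁.mul b₀₁, a₀₂.mul b₁₁, a₁₁.mul b₀₂, a₁₂.mul b₁₂, a₂₁.mul (b₀₁.mul b₀₂),
    a₂₂.mul (b₁₁.mul b₁₂), (a₀₁.mul a₀₂).mul c₁, (a₁₁.mul a₁₂).mul c₂,
    ((a₂₁.mul a₂₂).mul (c₁.mul c₂)).neg, trivial⟩

theorem pm_allBits : PM (allBits a b c) := by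
  obtain ⟨⟨a₀₁, a₀₂⟩, ⟨a₁₁, a₁₂⟩, ⟨a₂₁, a₂₂⟩⟩ := And.intro (ha 0) (And.intro (ha 1) (ha 2))
  obtain ⟨⟨b₀₁, b₀₂⟩, ⟨b₁₁, b₁₂⟩⟩ := And.intro (hb 0) (hb 1)
  exact (((((a₀₁.mul a₀₂).mul a₁₁).mul a₁₂).mul a₂₁).mul a₂₂).mul
    (((b₀₁.mul b₀₂).mul b₁₁).mul b₁₂) |>.mul (hc.1.mul hc.2)

theorem EB_add_EC_le_seven : EB a b + EC a c ≤ 7 := by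
  have hprod : ∏ i, combinedTerms a b c i = -1 := by
    rw [prod_combinedTerms, (pm_allBits ha hb hc).sq_eq_one]
  have := sum_le_card_sub_two_of_prod_eq_neg_one (fun i _ => pm_combinedTerms ha hb hc i) hprod
  rw [EB_add_EC_eq_sum_combinedTerms]
  simpa using this

end

/-- (i) some deterministic strategy attains `E_B = 6`, its algebraic
maximum; (ii) some deterministic strategy attains `E_C = 3`, its algebraic maximum;
yet (iii) every deterministic strategy satisfies `E_B + E_C ≤ 7 < 9`: the two residual
expressions are individually classically saturated but classically incompatible. -/
theorem cabello_residual_incompatibility :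
    (∃ (a : Fin 3 → ℤ × ℤ) (b : Fin 2 → ℤ × ℤ),
      (∀ k, PM (a k).1 ∧ PM (a k).2) ∧ (∀ l, PM (b l).1 ∧ PM (b l).2) ∧
        EB a b = 6) ∧
    (∃ (a : Fin 3 → ℤ × ℤ) (c : ℤ × ℤ),
      (∀ k, PM (a k).1 ∧ PM (a k).2) ∧ (PM c.1 ∧ PM c.2) ∧
        EC a c = 3) ∧
    ((∀ (a : Fin 3 → ℤ × ℤ) (b : Fin 2 → ℤ × ℤ) (c : ℤ × ℤ),
      (∀ k, PM (a k).1 ∧ PM (a k).2) → (∀ l, PM (b l).1 ∧ PM (b l).2) →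
        (PM c.1 ∧ PM c.2) → EB a b + EC a c ≤ 7) ∧ (7 : ℤ) < 9) := by
  refine ⟨⟨fun _ => (1, 1), fun _ => (1, 1), fun _ => ⟨.one, .one⟩, fun _ => ⟨.one, .one⟩, rfl⟩,
    ⟨![(1, 1), (1, 1), (1, -1)], (1, 1), ?_, ⟨.one, .one⟩, rfl⟩,
    fun a b c => EB_add_EC_le_seven, by norm_num⟩
  simp [Fin.forall_fin_succ, PM.one, PM.neg_one]
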